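/- arXiv:0810.0532 — 2 statements merged into one kernel-verified Lean document; each statement's English description precedes it below -/
import Mathlib

section
/- Let I be a finite index set and w : I → ℝ a weight function with w(e) > 0 for every e ∈ I and satisfying the superincreasing condition w(e) ≥ Σ_{e' ∈ I : w(e') < w(e)} w(e') for every e ∈ I. Then for any two subsets S, T ⊆ I with |S| = |T|, if the sequence of weights of the elements of S sorted in nonincreasing order is lexicographically strictly smaller than the corresponding sorted sequence for T, then Σ_{e ∈ S} w(e) < Σ_{e ∈ T} w(e). -/
/-- The weights of the elements of a finite set `S`, sorted in nonincreasing order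
(nondecreasing sort, then reversed). -/
noncomputable def sortedWeights {I : Type*} (w : I → ℝ) (S : Finset I) : List ℝ :=
  (Multiset.sort (S.val.map w) (· ≤ ·)).reverse

/-!
Write the sorted weight sequences of `S` and `T` as `p ++ a :: s` and `p ++ b :: t` with `a < b`.
Every entry of `a :: s` is at most `a < b`, so `a :: s` lists weights of elements of `S` lighter
than `b`; by superincreasingness their sum is at most `b`. Since `t` has as many (positive) entries
as `s`, the tail `b :: t` outweighs `a :: s`, while the common prefix `p` contributes equally.
-/

namespace List

theorem Lex.exists_eq_append_cons_of_length_eq {α : Type*} {r : α → α → Prop}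
    {l₁ l₂ : List α} (h : Lex r l₁ l₂) (hlen : l₁.length = l₂.length) :
    ∃ p a b s t, l₁ = p ++ a :: s ∧ l₂ = p ++ b :: t ∧ r a b ∧ s.length = t.length := by
  induction h with
  | nil => simp at hlen
  | @cons c l₁ l₂ _ ih =>
    obtain ⟨p, a, b, s, t, rfl, rfl, hab, hst⟩ := ih (by simpa using hlen)
    exact ⟨c :: p, a, b, s, t, rfl, rfl, hab, hst⟩
  | @rel a l₁ b l₂ hab => exact ⟨[], a, b, l₁, l₂, rfl, rfl, hab, by simpa using hlen⟩

theorem sum_cons_lt_sum_cons_of_sum_le {M : Type*} [AddCommMonoid M] [PartialOrder M]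
    [IsOrderedCancelAddMonoid M] {a b : M} {s t : List M} (hab : a < b)
    (hst : s.length = t.length) (hle : (a :: s).sum ≤ b) (ht : ∀ x ∈ t, 0 < x) :
    (a :: s).sum < (b :: t).sum := by
  cases t with
  | nil => simpa [length_eq_zero_iff.1 hst] using hab
  | cons y t =>
    calc (a :: s).sum ≤ b := hle
      _ < b + (y :: t).sum := lt_add_of_pos_right b (sum_pos _ ht (cons_ne_nil y t))
      _ = (b :: y :: t).sum := sum_cons.symm

end List

section SortedWeights

variable {I : Type*} (w : I → ℝ) (S : Finset I)

theorem coe_sortedWeights : (sortedWeights w S : Multiset ℝ) = S.val.map w := by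
  rw [sortedWeights, Multiset.coe_reverse, Multiset.sort_eq]

theorem sum_sortedWeights : (sortedWeights w S).sum = ∑ e ∈ S, w e := by
  rw [Finset.sum, ← coe_sortedWeights, Multiset.sum_coe]

theorem length_sortedWeights : (sortedWeights w S).length = S.card := by
  simpa using congrArg Multiset.card (coe_sortedWeights w S)

theorem mem_sortedWeights {x : ℝ} : x ∈ sortedWeights w S ↔ ∃ e ∈ S, w e = x := by
  rw [← Multiset.mem_coe, coe_sortedWeights, Multiset.mem_map]
  rfl

theorem pairwise_sortedWeights : (sortedWeights w S).Pairwise (· ≥ ·) := by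
  rw [sortedWeights, List.pairwise_reverse]
  exact Multiset.pairwise_sort _ _

theorem sum_le_sum_filter_of_sublist_sortedWeights (hw : ∀ e, 0 ≤ w e) {l : List ℝ}
    (hl : l.Sublist (sortedWeights w S)) {x : ℝ} (hlx : ∀ y ∈ l, y < x) :
    l.sum ≤ ∑ e ∈ S with w e < x, w e := by
  have hfilter : l.Sublist ((sortedWeights w S).filter (· < x)) := by
    have hl' := hl.filter (· < x)
    rwa [List.filter_eq_self.2 (by simpa using hlx)] at hl'
  have hcoe : ((sortedWeights w S).filter (· < x) : Multiset ℝ) =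
      (S.filter (w · < x)).val.map w := by
    rw [← Multiset.filter_coe, coe_sortedWeights, Multiset.filter_map, Finset.filter_val]
    rfl
  calc l.sum ≤ ((sortedWeights w S).filter (· < x)).sum :=
        hfilter.sum_le_sum fun y hy => by
          obtain ⟨e, -, rfl⟩ := (mem_sortedWeights w S).1 (List.mem_of_mem_filter hy)
          exact hw e
    _ = ∑ e ∈ S with w e < x, w e := by rw [Finset.sum, ← hcoe, Multiset.sum_coe]

theorem sum_filter_lt_le_of_superincreasing [Fintype I] (hw : ∀ e, 0 ≤ w e)
    (hsuper : ∀ e, (∑ e' ∈ Finset.univ.filter (fun e' => w e' < w e), w e') ≤ w e)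
    (e₀ : I) : ∑ e ∈ S with w e < w e₀, w e ≤ w e₀ :=
  (Finset.sum_le_sum_of_subset_of_nonneg (Finset.filter_subset_filter _ S.subset_univ)
    fun e _ _ => hw e).trans (hsuper e₀)

end SortedWeights

theorem superincreasing_lex_lt_sum_general {I : Type*} [Fintype I]
    (w : I → ℝ) (hpos : ∀ e, 0 < w e)
    (hsuper : ∀ e, (∑ e' ∈ Finset.univ.filter (fun e' => w e' < w e), w e') ≤ w e)
    (S T : Finset I) (hcard : S.card = T.card)
    (hlex : List.Lex (· < ·) (sortedWeights w S) (sortedWeights w T)) :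
    ∑ e ∈ S, w e < ∑ e ∈ T, w e := by
  obtain ⟨p, a, b, s, t, hS, hT, hab, hst⟩ :=
    hlex.exists_eq_append_cons_of_length_eq (by simp [length_sortedWeights, hcard])
  obtain ⟨e₀, -, rfl⟩ := (mem_sortedWeights w T).1 (show b ∈ _ by simp [hT])
  have hsub : (a :: s).Sublist (sortedWeights w S) := hS ▸ List.sublist_append_right p (a :: s)
  have hlt : ∀ y ∈ a :: s, y < w e₀ := by
    have hsorted := List.pairwise_cons.1 ((pairwise_sortedWeights w S).sublist hsub)
    simpa [hab] using fun y hy => (hsorted.1 y hy).trans_lt hab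
  have hhead : (a :: s).sum ≤ w e₀ :=
    (sum_le_sum_filter_of_sublist_sortedWeights w S (fun e => (hpos e).le) hsub hlt).trans
      (sum_filter_lt_le_of_superincreasing w S (fun e => (hpos e).le) hsuper e₀)
  have htail : ∀ x ∈ t, 0 < x := fun x hx => by
    obtain ⟨e, -, rfl⟩ := (mem_sortedWeights w T).1 (show x ∈ _ by simp [hT, hx])
    exact hpos e
  rw [← sum_sortedWeights, ← sum_sortedWeights, hS, hT, List.sum_append, List.sum_append]
  exact add_lt_add_right (List.sum_cons_lt_sum_cons_of_sum_le hab hst hhead htail) _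

/-- For a positive, superincreasing weight function `w` on a finite index set `I`
(each weight is at least the sum of all strictly smaller weights), if two subsets
`S` and `T` of equal cardinality have the property that the nonincreasingly sorted
weight sequence of `S` is lexicographically strictly smaller than that of `T`, then
the total weight of `S` is strictly smaller than the total weight of `T`. -/
theorem superincreasing_lex_lt_sum {I : Type*} [Fintype I] [DecidableEq I]
    (w : I → ℝ) (hpos : ∀ e, 0 < w e)
    (hsuper : ∀ e, (∑ e' ∈ Finset.univ.filter (fun e' => w e' < w e), w e') ≤ w e)
    (S T : Finset I) (hcard : S.card = T.card)
    (hlex : List.Lex (· < ·) (sortedWeights w S) (sortedWeights w T)) :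
    ∑ e ∈ S, w e < ∑ e ∈ T, w e :=
  superincreasing_lex_lt_sum_general w hpos hsuper S T hcard hlex
end

section
/- For any finite number n of agents and m of resources with nonnegative atomic demands r(i,o) ≥ 0, there exists a leximin-maximal admissible allocation in which every agent receives at most one resource (every bundle has cardinality at most 1). -/
/-!
Among the finitely many admissible allocations one is leximin-maximal, since the lexicographic
order on sorted utility vectors is linear. Shrinking each bundle of it to a single resource of
maximal demand keeps the allocation admissible and every utility unchanged, so the shrunk
allocation is leximin-maximal as well.
-/

/-- Max-utility with atomic demands: the utility of agent `i` for a bundle `S` is the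
largest demand `r i o` over `o ∈ S`, and `0` for the empty bundle. -/
noncomputable def maxUtil {n m : ℕ} (r : Fin n → Fin m → ℝ) (i : Fin n)
    (S : Finset (Fin m)) : ℝ :=
  S.fold max 0 (r i)

/-- An allocation is admissible (preemption constraint) if bundles of distinct agents
are pairwise disjoint. -/
def Admissible {n m : ℕ} (a : Fin n → Finset (Fin m)) : Prop :=
  ∀ i j, i ≠ j → Disjoint (a i) (a j)

/-- The nondecreasing rearrangement `u↑` of a vector. -/
noncomputable def sortedVec {n : ℕ} (u : Fin n → ℝ) : Fin n → ℝ :=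
  u ∘ Tuple.sort u

/-- `LeximinLT v u` means `v ≺_leximin u`: there is an index `i` such that the
nondecreasing rearrangements agree strictly before `i` and `v↑ i < u↑ i`. -/
noncomputable def LeximinLT {n : ℕ} (v u : Fin n → ℝ) : Prop :=
  ∃ i : Fin n, (∀ j < i, sortedVec v j = sortedVec u j) ∧ sortedVec v i < sortedVec u i

/-- A matching between agents and resources: each agent and each resource occurs in at
most one pair. -/
def IsMatching {n m : ℕ} (M : Finset (Fin n × Fin m)) : Prop :=
  ∀ p ∈ M, ∀ q ∈ M, p ≠ q → p.1 ≠ q.1 ∧ p.2 ≠ q.2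

/-- The allocation induced by a matching: agent `i` receives the (at most one) resource
matched to it. -/
def allocOf {n m : ℕ} (M : Finset (Fin n × Fin m)) (i : Fin n) : Finset (Fin m) :=
  (M.filter fun p => p.1 = i).image Prod.snd

theorem leximinLT_iff_toLex_lt {n : ℕ} (v u : Fin n → ℝ) :
    LeximinLT v u ↔ toLex (sortedVec v) < toLex (sortedVec u) :=
  Iff.rfl

theorem exists_leximinMaximal_of_finite {α : Type*} [Finite α] {n : ℕ} (P : α → Prop) (hP : ∃ a, P a)
    (u : α → Fin n → ℝ) : ∃ a, P a ∧ ¬ ∃ a', P a' ∧ LeximinLT (u a) (u a') := by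
  obtain ⟨a, ha, hmax⟩ := Set.exists_max_image {a | P a} (fun a => toLex (sortedVec (u a)))
    (Set.toFinite _) hP
  refine ⟨a, ha, fun ⟨a', ha', hlt⟩ => ?_⟩
  exact ((leximinLT_iff_toLex_lt _ _).1 hlt).not_ge (hmax a' ha')

section maxUtil

variable {n m : ℕ} (r : Fin n → Fin m → ℝ) (i : Fin n)

theorem maxUtil_eq_of_forall_le {S : Finset (Fin m)} {o : Fin m} (ho : o ∈ S)
    (hmax : ∀ o' ∈ S, r i o' ≤ r i o) : maxUtil r i S = max (r i o) 0 := by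
  refine le_antisymm ?_ ?_
  · rw [maxUtil, Finset.fold_max_le]
    exact ⟨le_max_right _ _, fun o' ho' => (hmax o' ho').trans (le_max_left _ _)⟩
  · rw [maxUtil, max_le_iff, Finset.le_fold_max, Finset.le_fold_max]
    exact ⟨Or.inr ⟨o, ho, le_rfl⟩, Or.inl le_rfl⟩

theorem exists_subset_card_le_one_maxUtil_eq (S : Finset (Fin m)) :
    ∃ T ⊆ S, T.card ≤ 1 ∧ maxUtil r i T = maxUtil r i S := by
  rcases S.eq_empty_or_nonempty with rfl | hS
  · exact ⟨∅, subset_rfl, by simp, rfl⟩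
  obtain ⟨o, ho, hmax⟩ := S.exists_max_image (r i) hS
  refine ⟨{o}, Finset.singleton_subset_iff.2 ho, (Finset.card_singleton o).le, ?_⟩
  rw [maxUtil_eq_of_forall_le r i ho hmax,
    maxUtil_eq_of_forall_le r i (Finset.mem_singleton_self o) (by simp)]

end maxUtil

theorem admissible_empty (n m : ℕ) : Admissible (fun _ : Fin n => (∅ : Finset (Fin m))) :=
  fun _ _ _ => Finset.disjoint_empty_left _

theorem Admissible.mono {n m : ℕ} {a b : Fin n → Finset (Fin m)} (ha : Admissible a)
    (hba : ∀ i, b i ⊆ a i) : Admissible b :=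
  fun i j hij => (ha i j hij).mono (hba i) (hba j)

theorem exists_leximinMaximal_card_le_one_general {n m : ℕ}
    (r : Fin n → Fin m → ℝ) :
    ∃ a : Fin n → Finset (Fin m), Admissible a ∧ (∀ i, (a i).card ≤ 1) ∧
      ¬ ∃ a' : Fin n → Finset (Fin m), Admissible a' ∧
          LeximinLT (fun i => maxUtil r i (a i)) (fun i => maxUtil r i (a' i)) := by
  obtain ⟨a, ha, hmax⟩ := exists_leximinMaximal_of_finite Admissible ⟨_, admissible_empty n m⟩
    fun a i => maxUtil r i (a i)
  choose b hba hcard hutil using fun i => exists_subset_card_le_one_maxUtil_eq r i (a i)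
  have hsame : (fun i => maxUtil r i (b i)) = fun i => maxUtil r i (a i) := funext hutil
  exact ⟨b, ha.mono hba, hcard, hsame ▸ hmax⟩

/-- For agents with max-utility functions and nonnegative atomic demands, there exists
a leximin-maximal admissible allocation in which every agent receives at most one
resource. -/
theorem exists_leximinMaximal_card_le_one {n m : ℕ}
    (r : Fin n → Fin m → ℝ) (hr : ∀ i o, 0 ≤ r i o) :
    ∃ a : Fin n → Finset (Fin m), Admissible a ∧ (∀ i, (a i).card ≤ 1) ∧
      ¬ ∃ a' : Fin n → Finset (Fin m), Admissible a' ∧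
          LeximinLT (fun i => maxUtil r i (a i)) (fun i => maxUtil r i (a' i)) :=
  exists_leximinMaximal_card_le_one_general r
end
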